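/- Let k, t1, t2 be integers with k > t1 > t2 ≥ 2, and let S be a (k; k−t1, k−t2)-SPID in a finite-dimensional vector space V over a field, with n = |S| ≥ 3, dim V ≥ n·t1 + (k−t1), and dim⟨S⟩ = k + (n−1)(t1−1) + 1. Then S contains no (k−t1)-sunflower of maximal dimension with at least three petals if and only if every ordering (π1, …, πn) of S for which (δ_2, …, δ_n) is non-increasing satisfies δ(S) = (k, t1, t1−1, …, t1−1). -/

import Mathlib

open Module

variable {F : Type*} [Field F] {V : Type*} [AddCommGroup V] [Module F V]
  [FiniteDimensional F V]

/-- The subspace `⟨π_1, …, π_j⟩` (1-based), i.e. the span of the `π i` with `(i : ℕ) < j`. -/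
def pspan {n : ℕ} (π : Fin n → Submodule F V) (j : ℕ) : Submodule F V :=
  ⨆ i : Fin n, ⨆ _ : (i : ℕ) < j, π i

/-- The 1-based difference sequence `δ_j = dim⟨π_1,…,π_j⟩ - dim⟨π_1,…,π_{j-1}⟩`. -/
noncomputable def delta {n : ℕ} (π : Fin n → Submodule F V) (j : ℕ) : ℕ :=
  finrank F ↥(pspan π j) - finrank F ↥(pspan π (j - 1))

/-- A `(k; ℓ_1, …, ℓ_v)`-SPID, where `L` is the set of prescribed intersection dimensions:
a family of pairwise distinct `k`-dimensional subspaces, any two distinct members meeting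
in a dimension belonging to `L`, and every value of `L` being attained. -/
def IsSPID {n : ℕ} (k : ℕ) (L : Set ℕ) (π : Fin n → Submodule F V) : Prop :=
  Function.Injective π ∧
  (∀ i, finrank F ↥(π i) = k) ∧
  (∀ i j, i ≠ j → finrank F ↥(π i ⊓ π j) ∈ L) ∧
  ∀ ℓ ∈ L, ∃ i j, i ≠ j ∧ finrank F ↥(π i ⊓ π j) = ℓ

/-- An `ℓ`-junta: all members pass through a common `ℓ`-dimensional subspace. -/
def IsJunta {n : ℕ} (ℓ : ℕ) (π : Fin n → Submodule F V) : Prop :=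
  ∃ C : Submodule F V, finrank F ↥C = ℓ ∧ ∀ i, C ≤ π i

/-- `S` contains an `ℓ`-sunflower of maximal dimension with `p` petals (all petals being
`k`-dimensional): `p` members of `S` pairwise meeting exactly in a common `ℓ`-dimensional
center and spanning a subspace of dimension `ℓ + p(k - ℓ)`. -/
def HasMaxSunflower (k ℓ p : ℕ) (S : Set (Submodule F V)) : Prop :=
  ∃ A : Finset (Submodule F V), ↑A ⊆ S ∧ A.card = p ∧
    ∃ C : Submodule F V, finrank F ↥C = ℓ ∧
      (∀ W ∈ A, ∀ W' ∈ A, W ≠ W' → W ⊓ W' = C) ∧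
      finrank F ↥(A.sup id) = ℓ + p * (k - ℓ)

/-!
Order `S` as `ρ` and write `δ` for its dimension increments. Every member meets the first one in
dimension at least `k - t₁`, so `δ_j ≤ t₁` for `j ≥ 2`, while `δ_1 = k` and the later increments add
up to `(n - 1)(t₁ - 1) + 1`. If the ordering is non-increasing this forces `δ_2 = t₁`, and
`δ_2 = δ_3 = t₁` means that the first three members form a `(k - t₁)`-sunflower of maximal
dimension; when `δ_3 ≤ t₁ - 1`, counting forces all later increments to be `t₁ - 1`.

Conversely, three petals of a maximal sunflower with at least three petals span dimension `k + 2t₁`.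
Put them first and order the rest so as to maximise `∑_m dim⟨ρ_1, …, ρ_m⟩`: by submodularity of
the dimension, swapping two neighbours whose increments go up would increase this sum, so the
ordering is non-increasing, yet `δ_3 = t₁`.
-/

theorem finrank_sup_add_finrank_le_of_le {X Y : Submodule F V} (hXY : X ≤ Y)
    (W : Submodule F V) :
    finrank F ↥(Y ⊔ W) + finrank F ↥X ≤ finrank F ↥(X ⊔ W) + finrank F ↥Y := by
  have hY := Submodule.finrank_sup_add_finrank_inf_eq Y W
  have hX := Submodule.finrank_sup_add_finrank_inf_eq X W
  have hXW : finrank F ↥(X ⊓ W) ≤ finrank F ↥(Y ⊓ W) :=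
    Submodule.finrank_mono (inf_le_inf_right W hXY)
  omega

theorem finrank_sup_add_finrank_le_of_le_of_le {C U W : Submodule F V} (hU : C ≤ U)
    (hW : C ≤ W) : finrank F ↥(U ⊔ W) + finrank F ↥C ≤ finrank F ↥U + finrank F ↥W := by
  have h := finrank_sup_add_finrank_le_of_le hU W
  rw [sup_eq_right.mpr hW] at h
  omega

theorem finrank_sup_finset_sup_add_le {C U : Submodule F V} {k : ℕ} (hCU : C ≤ U)
    (B : Finset (Submodule F V)) (hB : ∀ W ∈ B, C ≤ W ∧ finrank F ↥W = k) :
    finrank F ↥(U ⊔ B.sup id) + B.card * finrank F ↥C ≤ finrank F ↥U + B.card * k := by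
  classical
  induction B using Finset.induction_on generalizing U with
  | empty => rw [Finset.sup_empty, sup_bot_eq]; simp
  | insert W B hWB ih =>
    obtain ⟨hCW, hW⟩ := hB W (Finset.mem_insert_self W B)
    have hstep := finrank_sup_add_finrank_le_of_le_of_le hCU hCW
    have hrest := ih (U := U ⊔ W) (le_sup_of_le_left hCU) fun W' hW' =>
      hB W' (Finset.mem_insert_of_mem hW')
    rw [Finset.sup_insert, id, ← sup_assoc, Finset.card_insert_of_notMem hWB, add_one_mul,
      add_one_mul]
    omega

theorem inf_eq_inf_of_finrank_inf_sup_le {X Y Z : Submodule F V} {d : ℕ}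
    (hXY : finrank F ↥(X ⊓ Y) = d) (hZX : d ≤ finrank F ↥(Z ⊓ X))
    (hZY : d ≤ finrank F ↥(Z ⊓ Y)) (hZ : finrank F ↥(Z ⊓ (X ⊔ Y)) ≤ d) :
    Z ⊓ X = X ⊓ Y ∧ Z ⊓ Y = X ⊓ Y := by
  have hX : Z ⊓ X = Z ⊓ (X ⊔ Y) :=
    Submodule.eq_of_le_of_finrank_le (inf_le_inf_left Z le_sup_left) (by omega)
  have hY : Z ⊓ Y = Z ⊓ (X ⊔ Y) :=
    Submodule.eq_of_le_of_finrank_le (inf_le_inf_left Z le_sup_right) (by omega)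
  have hle : Z ⊓ X ≤ X ⊓ Y := le_inf inf_le_right ((hX.trans hY.symm).le.trans inf_le_right)
  have hZXY : Z ⊓ X = X ⊓ Y := Submodule.eq_of_le_of_finrank_le hle (by omega)
  exact ⟨hZXY, hY.trans (hX.symm.trans hZXY)⟩

omit [FiniteDimensional F V] in
theorem hasMaxSunflower_three {k ℓ : ℕ} {S : Set (Submodule F V)} {X Y Z C : Submodule F V}
    (hX : X ∈ S) (hY : Y ∈ S) (hZ : Z ∈ S) (hXY : X ≠ Y) (hXZ : X ≠ Z) (hYZ : Y ≠ Z)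
    (hC : finrank F ↥C = ℓ) (hXYC : X ⊓ Y = C) (hXZC : X ⊓ Z = C) (hYZC : Y ⊓ Z = C)
    (hdim : finrank F ↥(X ⊔ Y ⊔ Z) = ℓ + 3 * (k - ℓ)) :
    HasMaxSunflower k ℓ 3 S := by
  classical
  refine ⟨{X, Y, Z}, by simp [Set.insert_subset_iff, hX, hY, hZ],
    Finset.card_eq_three.mpr ⟨X, Y, Z, hXY, hXZ, hYZ, rfl⟩, C, hC, ?_, ?_⟩
  · simp only [Finset.mem_insert, Finset.mem_singleton]
    rintro W (rfl | rfl | rfl) W' (rfl | rfl | rfl) hWW' <;>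
      first | exact absurd rfl hWW' | assumption | (rw [inf_comm]; assumption)
  · rwa [show ({X, Y, Z} : Finset _).sup id = X ⊔ Y ⊔ Z by simp [sup_assoc]]

theorem HasMaxSunflower.exists_three {k ℓ p : ℕ} {S : Set (Submodule F V)}
    (h : HasMaxSunflower k ℓ p S) (hp : 3 ≤ p) (hS : ∀ W ∈ S, finrank F ↥W = k) :
    ∃ X ∈ S, ∃ Y ∈ S, ∃ Z ∈ S, X ≠ Y ∧ X ≠ Z ∧ Y ≠ Z ∧
      ℓ + 3 * (k - ℓ) ≤ finrank F ↥(X ⊔ Y ⊔ Z) := by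
  classical
  obtain ⟨A, hAS, rfl, C, hC, hAC, hA⟩ := h
  obtain ⟨s, hsA, hs⟩ := Finset.exists_subset_card_eq hp
  obtain ⟨X, Y, Z, hXY, hXZ, hYZ, rfl⟩ := Finset.card_eq_three.mp hs
  have hXA : X ∈ A := hsA (by simp)
  have hYA : Y ∈ A := hsA (by simp)
  have hZA : Z ∈ A := hsA (by simp)
  have hCW : ∀ W ∈ A, C ≤ W ∧ finrank F ↥W = k := fun W hW => by
    obtain ⟨W', hW', hne⟩ := Finset.exists_mem_ne (by omega : 1 < A.card) W
    exact ⟨hAC W hW W' hW' hne.symm ▸ inf_le_left, hS W (hAS hW)⟩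
  have hsup : X ⊔ Y ⊔ Z ⊔ (A \ {X, Y, Z}).sup id = A.sup id := by
    rw [show X ⊔ Y ⊔ Z = ({X, Y, Z} : Finset _).sup id by simp [sup_assoc], ← Finset.sup_union,
      Finset.union_sdiff_of_subset hsA]
  have hbound := finrank_sup_finset_sup_add_le (U := X ⊔ Y ⊔ Z)
    ((hCW X hXA).1.trans (le_sup_left.trans le_sup_left)) (A \ {X, Y, Z})
    fun W hW => hCW W (Finset.mem_sdiff.mp hW).1
  rw [hsup, hA, hC, Finset.card_sdiff_of_subset hsA, hs] at hbound
  have hℓk : ℓ ≤ k := hC ▸ (hCW X hXA).2 ▸ Submodule.finrank_mono (hCW X hXA).1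
  have hsplit : A.card * (k - ℓ) = (A.card - 3) * (k - ℓ) + 3 * (k - ℓ) := by
    rw [← add_mul, Nat.sub_add_cancel hp]
  have hk : (A.card - 3) * (k - ℓ) + (A.card - 3) * ℓ = (A.card - 3) * k := by
    rw [← mul_add, Nat.sub_add_cancel hℓk]
  exact ⟨X, hAS hXA, Y, hAS hYA, Z, hAS hZA, hXY, hXZ, hYZ, by omega⟩

theorem AntitoneOn.sum_Icc_le {f : ℕ → ℕ} {a b : ℕ} (hf : AntitoneOn f (Set.Icc a b)) :
    ∑ j ∈ Finset.Icc a b, f j ≤ (b + 1 - a) * f a := by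
  rw [← Nat.card_Icc, ← smul_eq_mul]
  exact Finset.sum_le_card_nsmul _ _ _ fun j hj => by
    obtain ⟨haj, hjb⟩ := Finset.mem_Icc.mp hj
    exact hf ⟨le_rfl, haj.trans hjb⟩ ⟨haj, hjb⟩ haj

section Orderings

variable {n : ℕ}

omit [FiniteDimensional F V] in
theorem pspan_zero (π : Fin n → Submodule F V) : pspan π 0 = ⊥ := by
  simp [pspan]

omit [FiniteDimensional F V] in
theorem pspan_mono (π : Fin n → Submodule F V) : Monotone (pspan π) := fun _ _ hab =>
  iSup_mono fun _ => iSup_le fun hi => le_iSup_of_le (hi.trans_le hab) le_rfl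

omit [FiniteDimensional F V] in
theorem pspan_succ (π : Fin n → Submodule F V) {j : ℕ} (hj : j < n) :
    pspan π (j + 1) = pspan π j ⊔ π ⟨j, hj⟩ := by
  refine le_antisymm (iSup_le fun i => iSup_le fun hi => ?_) (sup_le (pspan_mono π j.le_succ) ?_)
  · rcases (Nat.lt_succ_iff.mp hi).lt_or_eq with hij | hij
    · exact le_sup_of_le_left (le_iSup_of_le i (le_iSup_of_le hij le_rfl))
    · exact le_sup_of_le_right (le_of_eq (congrArg π (Fin.ext hij)))
  · exact le_iSup_of_le ⟨j, hj⟩ (le_iSup_of_le j.lt_succ_self le_rfl)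

omit [FiniteDimensional F V] in
theorem pspan_self (π : Fin n → Submodule F V) : pspan π n = ⨆ i, π i :=
  le_antisymm (iSup_mono fun _ => iSup_le fun _ => le_rfl)
    (iSup_mono fun i => le_iSup_of_le i.2 le_rfl)

omit [FiniteDimensional F V] in
theorem pspan_congr {ρ ρ' : Fin n → Submodule F V} {j : ℕ}
    (h : ∀ i : Fin n, (i : ℕ) < j → ρ i = ρ' i) : pspan ρ j = pspan ρ' j :=
  iSup_congr fun i => iSup_congr fun hi => h i hi

omit [FiniteDimensional F V] in
theorem pspan_comp_perm (π : Fin n → Submodule F V) (σ : Equiv.Perm (Fin n)) {j : ℕ}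
    (h : ∀ i, (σ i : ℕ) < j ↔ (i : ℕ) < j) : pspan (π ∘ σ) j = pspan π j := by
  calc pspan (π ∘ σ) j = ⨆ i, (fun x : Fin n => ⨆ _ : (x : ℕ) < j, π x) (σ i) :=
        iSup_congr fun i => iSup_congr_Prop (h i).symm fun _ => rfl
    _ = pspan π j := Equiv.iSup_comp (g := fun x : Fin n => ⨆ _ : (x : ℕ) < j, π x) σ

omit [FiniteDimensional F V] in
theorem pspan_comp_swap_of_ne (π : Fin n → Submodule F V) {m j : ℕ} (hm : m + 1 < n)
    (hj : j ≠ m + 1) :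
    pspan (π ∘ Equiv.swap ⟨m, by omega⟩ ⟨m + 1, hm⟩) j = pspan π j :=
  pspan_comp_perm π _ fun i => by
    rw [Equiv.swap_apply_def]
    split_ifs <;> simp only [Fin.ext_iff] at * <;> omega

omit [FiniteDimensional F V] in
theorem exists_perm_pspan_eq_iSup {r : ℕ} (π : Fin n → Submodule F V) (g : Fin r → Fin n)
    (hg : Function.Injective g) : ∃ τ : Equiv.Perm (Fin n), pspan (π ∘ τ) r = ⨆ i, π (g i) := by
  have hrn : r ≤ n := by simpa using Fintype.card_le_of_injective g hg
  obtain ⟨τ, hτ⟩ := Equiv.Perm.exists_extending_pair (Fin.castLE hrn) g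
    (Fin.castLE_injective hrn) hg
  refine ⟨τ, le_antisymm (iSup_le fun i => iSup_le fun hi => ?_)
    (iSup_le fun i => le_iSup_of_le (Fin.castLE hrn i) (le_iSup_of_le i.2 ?_))⟩
  · exact le_iSup_of_le ⟨i, hi⟩ (le_of_eq (congrArg π (hτ ⟨i, hi⟩)))
  · exact le_of_eq (congrArg π (hτ i).symm)

theorem finrank_pspan_succ (π : Fin n → Submodule F V) (j : ℕ) :
    finrank F ↥(pspan π (j + 1)) = finrank F ↥(pspan π j) + delta π (j + 1) := by
  have := Submodule.finrank_mono (pspan_mono π (Nat.le_add_right j 1))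
  rw [delta, Nat.add_sub_cancel]
  omega

theorem sum_delta (π : Fin n → Submodule F V) (m : ℕ) :
    ∑ j ∈ Finset.Icc 1 m, delta π j = finrank F ↥(pspan π m) := by
  induction m with
  | zero => rw [pspan_zero, finrank_bot]; simp
  | succ m ih => rw [Finset.sum_Icc_succ_top (by omega), ih, finrank_pspan_succ]

theorem delta_one_add_sum_delta (π : Fin n → Submodule F V) (hn : 0 < n) :
    delta π 1 + ∑ j ∈ Finset.Icc 2 n, delta π j = finrank F ↥(⨆ i, π i) := by
  rw [← pspan_self, ← sum_delta, ← Finset.insert_Icc_add_one_left_eq_Icc (show 1 ≤ n from hn),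
    Finset.sum_insert (by simp)]
  rfl

theorem delta_succ_add_finrank_inf (π : Fin n → Submodule F V) {j : ℕ} (hj : j < n) :
    delta π (j + 1) + finrank F ↥(π ⟨j, hj⟩ ⊓ pspan π j) = finrank F ↥(π ⟨j, hj⟩) := by
  have h := Submodule.finrank_sup_add_finrank_inf_eq (pspan π j) (π ⟨j, hj⟩)
  rw [← pspan_succ π hj, finrank_pspan_succ, inf_comm] at h
  omega

theorem delta_one (π : Fin n → Submodule F V) (hn : 0 < n) :
    delta π 1 = finrank F ↥(π ⟨0, hn⟩) := by
  have h := delta_succ_add_finrank_inf π hn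
  rwa [pspan_zero, inf_bot_eq, finrank_bot, add_zero] at h

theorem delta_succ_le {k t : ℕ} {π : Fin n → Submodule F V} (hdim : ∀ i, finrank F ↥(π i) = k)
    (hmeet : ∀ i j, i ≠ j → k - t ≤ finrank F ↥(π i ⊓ π j)) {j : ℕ} (hj : 1 ≤ j)
    (hjn : j < n) : delta π (j + 1) ≤ t := by
  have h0 : π ⟨0, by omega⟩ ≤ pspan π j := le_iSup_of_le ⟨0, by omega⟩ (le_iSup_of_le hj le_rfl)
  have hle := Submodule.finrank_mono (inf_le_inf_left (π ⟨j, hjn⟩) h0)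
  have hmeet' := hmeet ⟨j, hjn⟩ ⟨0, by omega⟩ (by simp only [ne_eq, Fin.mk.injEq]; omega)
  have h := delta_succ_add_finrank_inf π hjn
  rw [hdim] at h
  omega

theorem finrank_pspan_lt_comp_swap (π : Fin n → Submodule F V) {m : ℕ} (hm : m + 1 < n)
    (h : delta π (m + 1) < delta π (m + 2)) :
    finrank F ↥(pspan π (m + 1)) <
      finrank F ↥(pspan (π ∘ Equiv.swap ⟨m, by omega⟩ ⟨m + 1, hm⟩) (m + 1)) := by
  have hswap : pspan (π ∘ Equiv.swap ⟨m, by omega⟩ ⟨m + 1, hm⟩) (m + 1) =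
      pspan π m ⊔ π ⟨m + 1, hm⟩ := by
    rw [pspan_succ _ (by omega), pspan_comp_swap_of_ne π hm (by omega), Function.comp_apply,
      Equiv.swap_apply_left]
  have hsub := finrank_sup_add_finrank_le_of_le (pspan_mono π (Nat.le_add_right m 1))
    (π ⟨m + 1, hm⟩)
  rw [← pspan_succ π hm, ← hswap, finrank_pspan_succ π (m + 1)] at hsub
  have hm1 := finrank_pspan_succ π m
  have e : delta π (m + 1 + 1) = delta π (m + 2) := rfl
  omega

theorem exists_perm_delta_antitone (π : Fin n → Submodule F V) (r : ℕ) :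
    ∃ σ : Equiv.Perm (Fin n), (∀ i : Fin n, (i : ℕ) < r → σ i = i) ∧
      ∀ j, r < j → j < n → delta (π ∘ σ) (j + 1) ≤ delta (π ∘ σ) j := by
  classical
  let T := Finset.univ.filter fun σ : Equiv.Perm (Fin n) => ∀ i : Fin n, (i : ℕ) < r → σ i = i
  let g := fun σ : Equiv.Perm (Fin n) => ∑ m ∈ Finset.range (n + 1), finrank F ↥(pspan (π ∘ σ) m)
  obtain ⟨σ, hσT, hmax⟩ := T.exists_max_image g ⟨1, by simp [T]⟩
  refine ⟨σ, (Finset.mem_filter.mp hσT).2, fun j hrj hjn => not_lt.mp fun hlt => ?_⟩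
  obtain ⟨m, rfl⟩ : ∃ m, j = m + 1 := ⟨j - 1, by omega⟩
  have hswap := finrank_pspan_lt_comp_swap (π ∘ σ) hjn hlt
  let τ := Equiv.swap (⟨m, by omega⟩ : Fin n) ⟨m + 1, hjn⟩
  have hτT : σ * τ ∈ T := Finset.mem_filter.mpr ⟨Finset.mem_univ _, fun i hi => by
    rw [Equiv.Perm.mul_apply, Equiv.swap_apply_of_ne_of_ne (by simp [Fin.ext_iff]; omega)
      (by simp [Fin.ext_iff]; omega)]
    exact (Finset.mem_filter.mp hσT).2 i hi⟩
  have hgain : g σ < g (σ * τ) := by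
    refine Finset.sum_lt_sum (fun x _ => ?_) ⟨m + 1, Finset.mem_range.mpr (by omega), hswap⟩
    rcases eq_or_ne x (m + 1) with rfl | hx
    · exact hswap.le
    · exact (pspan_comp_swap_of_ne (π ∘ σ) hjn hx).symm ▸ le_rfl
  exact (hmax _ hτT).not_gt hgain

omit [FiniteDimensional F V] in
theorem IsSPID.of_range_eq {k : ℕ} {L : Set ℕ} {π ρ : Fin n → Submodule F V}
    (hπ : IsSPID k L π) (hρ : Function.Injective ρ) (hrange : Set.range ρ = Set.range π) :
    IsSPID k L ρ := by
  obtain ⟨hπinj, hdim, hmeet, hattain⟩ := hπ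
  have hρπ (i : Fin n) : ∃ a, π a = ρ i := by rw [← Set.mem_range, ← hrange]; exact ⟨i, rfl⟩
  have hπρ (a : Fin n) : ∃ i, ρ i = π a := by rw [← Set.mem_range, hrange]; exact ⟨a, rfl⟩
  refine ⟨hρ, fun i => ?_, fun i j hij => ?_, fun ℓ hℓ => ?_⟩
  · obtain ⟨a, ha⟩ := hρπ i
    exact ha ▸ hdim a
  · obtain ⟨a, ha⟩ := hρπ i
    obtain ⟨b, hb⟩ := hρπ j
    rw [← ha, ← hb]
    exact hmeet a b fun hab => hij (hρ (ha.symm.trans (hab ▸ hb)))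
  · obtain ⟨a, b, hab, hℓ⟩ := hattain ℓ hℓ
    obtain ⟨i, hi⟩ := hπρ a
    obtain ⟨j, hj⟩ := hπρ b
    exact ⟨i, j, fun hij => hab (hπinj (hi.symm.trans (hij ▸ hj))), by rw [hi, hj]; exact hℓ⟩

omit [FiniteDimensional F V] in
theorem IsSPID.sub_le_finrank_inf {k t1 t2 : ℕ} {π : Fin n → Submodule F V}
    (hS : IsSPID k {k - t1, k - t2} π) (ht : t2 < t1) (i j : Fin n) (hij : i ≠ j) :
    k - t1 ≤ finrank F ↥(π i ⊓ π j) := by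
  have h := hS.2.2.1 i j hij
  simp only [Set.mem_insert_iff, Set.mem_singleton_iff] at h
  omega

theorem finrank_pspan_three (π : Fin n → Submodule F V) :
    finrank F ↥(pspan π 3) = delta π 1 + delta π 2 + delta π 3 := by
  simp [← sum_delta, Finset.sum_Icc_succ_top]

theorem hasMaxSunflower_of_delta_eq {k t : ℕ} (htk : t ≤ k) {ρ : Fin n → Submodule F V}
    (hinj : Function.Injective ρ) (hdim : ∀ i, finrank F ↥(ρ i) = k)
    (hmeet : ∀ i j, i ≠ j → k - t ≤ finrank F ↥(ρ i ⊓ ρ j)) (hn : 3 ≤ n)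
    (hδ2 : delta ρ 2 = t) (hδ3 : delta ρ 3 = t) :
    HasMaxSunflower k (k - t) 3 (Set.range ρ) := by
  have hp1 : pspan ρ 1 = ρ ⟨0, by omega⟩ := by
    simpa [pspan_zero] using pspan_succ ρ (j := 0) (by omega)
  have hp2 : pspan ρ 2 = ρ ⟨0, by omega⟩ ⊔ ρ ⟨1, by omega⟩ := by
    rw [← hp1]; exact pspan_succ ρ (j := 1) (by omega)
  have hp3 : pspan ρ 3 = ρ ⟨0, by omega⟩ ⊔ ρ ⟨1, by omega⟩ ⊔ ρ ⟨2, by omega⟩ := by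
    rw [← hp2]; exact pspan_succ ρ (j := 2) (by omega)
  have hXY : finrank F ↥(ρ ⟨0, by omega⟩ ⊓ ρ ⟨1, by omega⟩) = k - t := by
    have h := delta_succ_add_finrank_inf ρ (j := 1) (by omega)
    rw [hp1, hdim, inf_comm] at h
    change delta ρ 2 + _ = k at h
    omega
  have hZ : finrank F ↥(ρ ⟨2, by omega⟩ ⊓ (ρ ⟨0, by omega⟩ ⊔ ρ ⟨1, by omega⟩)) = k - t := by
    have h := delta_succ_add_finrank_inf ρ (j := 2) (by omega)
    rw [hp2, hdim] at h
    change delta ρ 3 + _ = k at h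
    omega
  obtain ⟨hZX, hZY⟩ := inf_eq_inf_of_finrank_inf_sup_le hXY (hmeet _ _ (by simp))
    (hmeet _ _ (by simp)) hZ.le
  refine hasMaxSunflower_three (Set.mem_range_self _) (Set.mem_range_self _)
    (Set.mem_range_self _) (hinj.ne (by simp)) (hinj.ne (by simp)) (hinj.ne (by simp)) hXY rfl
    ((inf_comm _ _).trans hZX) ((inf_comm _ _).trans hZY) ?_
  rw [← hp3, finrank_pspan_three, delta_one ρ (by omega), hdim, hδ2, hδ3]
  omega

theorem delta_eq_of_not_hasMaxSunflower {k t : ℕ} (htk : t ≤ k) {ρ : Fin n → Submodule F V}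
    (hinj : Function.Injective ρ) (hdim : ∀ i, finrank F ↥(ρ i) = k)
    (hmeet : ∀ i j, i ≠ j → k - t ≤ finrank F ↥(ρ i ⊓ ρ j))
    (hspan : finrank F ↥(⨆ i, ρ i) = k + (n - 1) * (t - 1) + 1)
    (hanti : ∀ j, 2 ≤ j → j < n → delta ρ (j + 1) ≤ delta ρ j)
    (hNS : ¬ HasMaxSunflower k (k - t) 3 (Set.range ρ)) :
    delta ρ 1 = k ∧ delta ρ 2 = t ∧ ∀ j, 3 ≤ j → j ≤ n → delta ρ j = t - 1 := by
  have hn : 0 < n := Nat.pos_of_ne_zero fun hn0 => by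
    subst hn0
    rw [iSup_of_empty, finrank_bot] at hspan
    omega
  have hδ1 : delta ρ 1 = k := (delta_one ρ hn).trans (hdim _)
  have hsum : ∑ j ∈ Finset.Icc 2 n, delta ρ j = (n - 1) * (t - 1) + 1 := by
    have h := delta_one_add_sum_delta ρ hn
    rw [hδ1, hspan] at h
    omega
  have hn2 : 2 ≤ n := by
    by_contra h
    rw [Finset.Icc_eq_empty (by omega), Finset.sum_empty] at hsum
    omega
  have hle : ∀ j, 2 ≤ j → j ≤ n → delta ρ j ≤ t := fun j hj hjn => by
    obtain ⟨m, rfl⟩ : ∃ m, j = m + 1 := ⟨j - 1, by omega⟩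
    exact delta_succ_le hdim hmeet (by omega) (by omega)
  have hanti' : AntitoneOn (delta ρ) (Set.Icc 2 n) :=
    antitoneOn_of_add_one_le Set.ordConnected_Icc fun a _ ha ha1 => hanti a ha.1 ha1.2
  have hδ2 : delta ρ 2 = t := by
    have h := hanti'.sum_Icc_le
    rw [hsum, show n + 1 - 2 = n - 1 by omega] at h
    have := Nat.lt_of_mul_lt_mul_left (a := n - 1) (b := t - 1) (c := delta ρ 2) (by omega)
    have := hle 2 le_rfl hn2
    omega
  refine ⟨hδ1, hδ2, fun j hj3 hjn => ?_⟩
  have hδ3 : delta ρ 3 < t :=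
    (hle 3 (by norm_num) (by omega)).lt_of_ne
      fun h => hNS (hasMaxSunflower_of_delta_eq htk hinj hdim hmeet (by omega) hδ2 h)
  have hle3 : ∀ i ∈ Finset.Icc 3 n, delta ρ i ≤ t - 1 := fun i hi => by
    obtain ⟨hi3, hin⟩ := Finset.mem_Icc.mp hi
    have := hanti' ⟨by norm_num, by omega⟩ ⟨by omega, hin⟩ hi3
    omega
  have hsum3 : ∑ i ∈ Finset.Icc 3 n, delta ρ i = ∑ _i ∈ Finset.Icc 3 n, (t - 1) := by
    have hsplit : Finset.Icc 2 n = insert 2 (Finset.Icc 3 n) :=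
      (Finset.insert_Icc_add_one_left_eq_Icc (by omega)).symm
    rw [hsplit, Finset.sum_insert (by simp), hδ2] at hsum
    have hmul : (n - 1) * (t - 1) = (n + 1 - 3) * (t - 1) + (t - 1) := by
      rw [← Nat.succ_mul]
      congr 1
      omega
    rw [Finset.sum_const, smul_eq_mul, Nat.card_Icc]
    omega
  exact (Finset.sum_eq_sum_iff_of_le hle3).mp hsum3 j (Finset.mem_Icc.mpr ⟨hj3, hjn⟩)

theorem exists_antitone_delta_three_eq {k t : ℕ} {π : Fin n → Submodule F V}
    (hinj : Function.Injective π) (hdim : ∀ i, finrank F ↥(π i) = k)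
    (hmeet : ∀ i j, i ≠ j → k - t ≤ finrank F ↥(π i ⊓ π j)) {a b c : Fin n}
    (hab : a ≠ b) (hac : a ≠ c) (hbc : b ≠ c)
    (hsup : k + 2 * t ≤ finrank F ↥(π a ⊔ π b ⊔ π c)) :
    ∃ ρ : Fin n → Submodule F V, Function.Injective ρ ∧ Set.range ρ = Set.range π ∧
      (∀ j, 2 ≤ j → j < n → delta ρ (j + 1) ≤ delta ρ j) ∧ delta ρ 3 = t := by
  have hg : Function.Injective ![a, b, c] := by
    intro i j
    fin_cases i <;> fin_cases j <;> simp [hab, hac, hbc, hab.symm, hac.symm, hbc.symm]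
  have hn : 3 ≤ n := by simpa using Fintype.card_le_of_injective _ hg
  obtain ⟨τ, hτ⟩ := exists_perm_pspan_eq_iSup π ![a, b, c] hg
  obtain ⟨σ, hσ, hanti⟩ := exists_perm_delta_antitone (π ∘ τ) 3
  set ρ := π ∘ ⇑(τ * σ)
  have hρdim : ∀ i, finrank F ↥(ρ i) = k := fun i => hdim _
  have hρmeet : ∀ i j, i ≠ j → k - t ≤ finrank F ↥(ρ i ⊓ ρ j) := fun i j hij =>
    hmeet _ _ ((τ * σ).injective.ne hij)
  have hp3 : pspan ρ 3 = π a ⊔ π b ⊔ π c := by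
    rw [show pspan ρ 3 = pspan (π ∘ τ) 3 from pspan_congr fun i hi => by simp [ρ, hσ i hi], hτ]
    simp
  have h3 := finrank_pspan_three ρ
  rw [hp3, delta_one ρ (by omega), hρdim] at h3
  have hδ2 : delta ρ 2 ≤ t := delta_succ_le hρdim hρmeet (j := 1) le_rfl (by omega)
  have hδ3 : delta ρ 3 ≤ t := delta_succ_le hρdim hρmeet (j := 2) (by norm_num) (by omega)
  have hδ4 : 3 < n → delta ρ 4 ≤ t := delta_succ_le hρdim hρmeet (j := 3) (by norm_num)
  refine ⟨ρ, hinj.comp (τ * σ).injective, (τ * σ).surjective.range_comp π, fun j hj hjn => ?_,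
    by omega⟩
  rcases (show j = 2 ∨ j = 3 ∨ 3 < j by omega) with rfl | rfl | hj3
  · show delta ρ 3 ≤ delta ρ 2
    omega
  · show delta ρ 4 ≤ delta ρ 3
    have := hδ4 hjn
    omega
  · exact hanti j hj3 hjn

end Orderings

theorem statement7_general {n k t1 t2 : ℕ} (h2 : t2 < t1) (h3 : t1 < k)
    (π : Fin n → Submodule F V) (hS : IsSPID k {k - t1, k - t2} π)
    (hspan : finrank F ↥(⨆ i, π i) = k + (n - 1) * (t1 - 1) + 1) :
    (¬ ∃ p, 3 ≤ p ∧ HasMaxSunflower k (k - t1) p (Set.range π)) ↔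
      ∀ ρ : Fin n → Submodule F V, Function.Injective ρ →
        Set.range ρ = Set.range π →
        (∀ j, 2 ≤ j → j < n → delta ρ (j + 1) ≤ delta ρ j) →
        delta ρ 1 = k ∧ delta ρ 2 = t1 ∧ ∀ j, 3 ≤ j → j ≤ n → delta ρ j = t1 - 1 := by
  constructor
  · intro hNS ρ hρ hrange hanti
    have hρS := hS.of_range_eq hρ hrange
    refine delta_eq_of_not_hasMaxSunflower h3.le hρ hρS.2.1 (hρS.sub_le_finrank_inf h2) ?_ hanti
      fun h => hNS ⟨3, le_rfl, hrange ▸ h⟩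
    rwa [← sSup_range, hrange, sSup_range]
  · rintro hR ⟨p, hp, hsun⟩
    obtain ⟨_, ⟨a, rfl⟩, _, ⟨b, rfl⟩, _, ⟨c, rfl⟩, hab, hac, hbc, hsup⟩ :=
      hsun.exists_three hp (by rintro _ ⟨i, rfl⟩; exact hS.2.1 i)
    replace hab := ne_of_apply_ne π hab
    replace hac := ne_of_apply_ne π hac
    replace hbc := ne_of_apply_ne π hbc
    have hn : 3 ≤ n := by
      simpa [Finset.card_eq_three.mpr ⟨a, b, c, hab, hac, hbc, rfl⟩] using
        Finset.card_le_univ {a, b, c}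
    obtain ⟨ρ, hρ, hrange, hanti, hδ3⟩ := exists_antitone_delta_three_eq hS.1 hS.2.1
      (hS.sub_le_finrank_inf h2) (t := t1) hab hac hbc (by omega)
    have := (hR ρ hρ hrange hanti).2.2 3 le_rfl hn
    omega

/-- Proposition 2.3 (first part): `S` contains no `(k-t₁)`-sunflower of maximal dimension
with at least three petals iff every non-increasing ordering of `S` has array
`δ(S) = (k, t₁, t₁-1, …, t₁-1)`. -/
theorem statement7 {n k t1 t2 : ℕ} (h1 : 2 ≤ t2) (h2 : t2 < t1) (h3 : t1 < k)
    (hn : 3 ≤ n) (π : Fin n → Submodule F V) (hS : IsSPID k {k - t1, k - t2} π)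
    (hdimV : n * t1 + (k - t1) ≤ finrank F V)
    (hspan : finrank F ↥(⨆ i, π i) = k + (n - 1) * (t1 - 1) + 1) :
    (¬ ∃ p, 3 ≤ p ∧ HasMaxSunflower k (k - t1) p (Set.range π)) ↔
      ∀ ρ : Fin n → Submodule F V, Function.Injective ρ →
        Set.range ρ = Set.range π →
        (∀ j, 2 ≤ j → j < n → delta ρ (j + 1) ≤ delta ρ j) →
        delta ρ 1 = k ∧ delta ρ 2 = t1 ∧ ∀ j, 3 ≤ j → j ≤ n → delta ρ j = t1 - 1 :=
  statement7_general h2 h3 π hS hspan
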